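/- Let A be a homotopy cut-set for paths α, β : [0,1] → X with α(0) = β(0) = x₀. If x₀ ∉ aw(X), then there exists a homotopy cut-set B ⊆ A for α and β in which 0 is an isolated point of B. -/
import Mathlib


open unitInterval

variable {X : Type*} [TopologicalSpace X]

noncomputable def subpath (α : C(ℝ, X)) (a b : ℝ) : Path (α a) (α b) where
  toFun t := α (a + (t : ℝ) * (b - a))
  continuous_toFun := α.continuous.comp (by continuity)
  source' := by simp
  target' := by
    show α (a + ((1 : unitInterval) : ℝ) * (b - a)) = α b
    rw [Set.Icc.coe_one, one_mul]
    congr 1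
    ring

def HomotopyCutSet (α β : C(ℝ, X)) (A : Set ℝ) : Prop :=
  IsClosed A ∧ IsNowhereDense A ∧ A ⊆ Set.Icc 0 1 ∧ (0:ℝ) ∈ A ∧ (1:ℝ) ∈ A ∧
  Set.EqOn α β A ∧
  ∀ a ∈ A, ∀ b ∈ A, a < b → A ∩ Set.Ioo a b = ∅ →
    ∀ (h1 : α a = β a) (h2 : α b = β b),
      (subpath α a b).Homotopic ((subpath β a b).cast h1 h2)

def awSet (X : Type*) [TopologicalSpace X] : Set X :=
  {x | ∃ γ : ℕ → Path x x, (∀ n, ¬(γ n).Homotopic (Path.refl x)) ∧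
    ∀ U ∈ nhds x, ∀ᶠ n in Filter.atTop, Set.range (γ n) ⊆ U}

def ScatteredSet {Y : Type*} [TopologicalSpace Y] (S : Set Y) : Prop :=
  ∀ T ⊆ S, T.Nonempty → ∃ x ∈ T, ∃ U : Set Y, IsOpen U ∧ U ∩ T = {x}

/-- Cancellation: if `p.trans q.symm` is null-homotopic then `p` and `q` are homotopic. -/
lemma cancel_homotopic {x y : X} (p q : Path x y)
    (h : (p.trans q.symm).Homotopic (Path.refl x)) : p.Homotopic q := by
  have h1 : p.Homotopic (p.trans (Path.refl y)) := ⟨(Path.Homotopy.transRefl p).symm⟩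
  have h2 : (p.trans (Path.refl y)).Homotopic (p.trans (q.symm.trans q)) :=
    (Path.Homotopic.refl p).hcomp ⟨Path.Homotopy.reflSymmTrans q⟩
  have h3 : (p.trans (q.symm.trans q)).Homotopic ((p.trans q.symm).trans q) :=
    ⟨(Path.Homotopy.transAssoc p q.symm q).symm⟩
  have h4 : ((p.trans q.symm).trans q).Homotopic ((Path.refl x).trans q) :=
    h.hcomp (Path.Homotopic.refl q)
  have h5 : ((Path.refl x).trans q).Homotopic q := ⟨Path.Homotopy.reflTrans q⟩
  exact (((h1.trans h2).trans h3).trans h4).trans h5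

lemma range_subpath_subset (α : C(ℝ, X)) {a : ℝ} (ha : 0 ≤ a) {U : Set X}
    (hU : ∀ s ∈ Set.Icc (0:ℝ) a, α s ∈ U) : Set.range (subpath α 0 a) ⊆ U := by
  rintro _ ⟨t, rfl⟩
  show α (0 + (t : ℝ) * (a - 0)) ∈ U
  apply hU
  have ht0 := t.2.1
  have ht1 := t.2.2
  constructor <;> nlinarith

lemma nowhereDense_mono {s t : Set ℝ} (hts : t ⊆ s) (hs : IsNowhereDense s) :
    IsNowhereDense t := by
  have : interior (closure t) ⊆ interior (closure s) :=
    interior_mono (closure_mono hts)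
  rw [IsNowhereDense] at *
  exact Set.eq_empty_of_subset_empty (hs ▸ this)

/-- If `A` is a homotopy cut-set for paths `α, β` with common initial point `x₀ ∉ aw(X)`, then
there is a homotopy cut-set `B ⊆ A` for `α` and `β` in which `0` is isolated. -/
theorem stmt10 {X : Type*} [TopologicalSpace X] (α β : C(ℝ, X)) (A : Set ℝ)
    (hA : HomotopyCutSet α β A) (x₀ : X) (hx0 : α 0 = x₀) (hx0' : β 0 = x₀)
    (hw : x₀ ∉ awSet X) :
    ∃ B ⊆ A, HomotopyCutSet α β B ∧ ∃ ε > (0:ℝ), B ∩ Set.Ioo 0 ε = ∅ := by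
  subst hx0
  obtain ⟨hAcl, hAnd, hAsub, hA0, hA1, hAeq, hAhom⟩ := hA
  by_cases hiso : ∃ ε > (0:ℝ), A ∩ Set.Ioo 0 ε = ∅
  · exact ⟨A, subset_rfl, ⟨hAcl, hAnd, hAsub, hA0, hA1, hAeq, hAhom⟩, hiso⟩
  push_neg at hiso
  have h1 : α 0 = β 0 := hAeq hA0
  -- choose a sequence in A tending to 0
  have hseq : ∀ n : ℕ, ∃ t, t ∈ A ∩ Set.Ioo 0 (1 / (n + 1 : ℝ)) := by
    intro n
    have hpos : (0:ℝ) < 1 / (n + 1 : ℝ) := by positivity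
    exact hiso _ hpos
  choose a ha using hseq
  have haA : ∀ n, a n ∈ A := fun n => (ha n).1
  have hapos : ∀ n, 0 < a n := fun n => (ha n).2.1
  have halt : ∀ n, a n < 1 / (n + 1 : ℝ) := fun n => (ha n).2.2
  -- the loops
  have h2 : ∀ n, α (a n) = β (a n) := fun n => hAeq (haA n)
  set p : ℕ → Path (α 0) (α 0) := fun n =>
    (subpath α 0 (a n)).trans ((subpath β 0 (a n)).cast h1 (h2 n)).symm with hp
  -- key: some loop is null-homotopic
  have hkey : ∃ n, (p n).Homotopic (Path.refl (α 0)) := by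
    by_contra hcon
    push_neg at hcon
    apply hw
    refine ⟨p, fun n => hcon n, ?_⟩
    intro U hU
    have hUmem : α 0 ∈ U := mem_of_mem_nhds hU
    have hV : (α ⁻¹' U ∩ β ⁻¹' U) ∈ nhds (0:ℝ) := by
      apply Filter.inter_mem
      · exact α.continuous.continuousAt.preimage_mem_nhds hU
      · exact β.continuous.continuousAt.preimage_mem_nhds (by rw [hx0']; exact hU)
    rcases Metric.mem_nhds_iff.1 hV with ⟨δ, hδpos, hball⟩
    have hev : ∀ᶠ n : ℕ in Filter.atTop, 1 / (n + 1 : ℝ) < δ :=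
      tendsto_one_div_add_atTop_nhds_zero_nat.eventually_lt_const hδpos
    filter_upwards [hev] with n hn
    have hsub : ∀ s ∈ Set.Icc (0:ℝ) (a n), s ∈ α ⁻¹' U ∩ β ⁻¹' U := by
      intro s hs
      apply hball
      simp only [Metric.mem_ball, Real.dist_eq, sub_zero]
      rw [abs_of_nonneg hs.1]
      exact lt_trans (lt_of_le_of_lt hs.2 (halt n)) hn
    have hr : Set.range (p n) ⊆ U := by
      rw [hp]
      simp only
      rw [Path.trans_range, Path.symm_range]
      apply Set.union_subset
      · exact range_subpath_subset α (hapos n).le (fun s hs => (hsub s hs).1)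
      · have : Set.range ((subpath β 0 (a n)).cast h1 (h2 n)) = Set.range (subpath β 0 (a n)) := by
          rw [Path.cast_coe]
        rw [this]
        exact range_subpath_subset β (hapos n).le (fun s hs => (hsub s hs).2)
    exact hr
  obtain ⟨n, hnull⟩ := hkey
  have hhom : (subpath α 0 (a n)).Homotopic ((subpath β 0 (a n)).cast h1 (h2 n)) :=
    cancel_homotopic _ _ hnull
  set c := a n with hc
  have hcA : c ∈ A := haA n
  have hcpos : 0 < c := hapos n
  have hc1 : c ≤ 1 := (hAsub hcA).2
  refine ⟨insert 0 (A ∩ Set.Ici c), ?_, ?_, c, hcpos, ?_⟩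
  · rintro x (rfl | ⟨hxA, -⟩)
    · exact hA0
    · exact hxA
  · have hBA : insert 0 (A ∩ Set.Ici c) ⊆ A := by
      rintro x (rfl | ⟨hxA, -⟩)
      · exact hA0
      · exact hxA
    refine ⟨?_, nowhereDense_mono hBA hAnd, fun x hx => hAsub (hBA hx),
      Set.mem_insert _ _, Set.mem_insert_of_mem _ ⟨hA1, hc1⟩, hAeq.mono hBA, ?_⟩
    · rw [Set.insert_eq]
      exact isClosed_singleton.union (hAcl.inter isClosed_Ici)
    · intro u hu v hv huv hgap hu1 hu2
      rcases hu with rfl | ⟨huA, huc⟩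
      · -- u = 0 ; show v = c
        have hvA : v ∈ A ∩ Set.Ici c := by
          rcases hv with rfl | hv
          · exact absurd huv (lt_irrefl 0)
          · exact hv
        have hvc : v = c := by
          rcases lt_or_ge c v with hlt | hge
          · exfalso
            have : c ∈ insert 0 (A ∩ Set.Ici c) ∩ Set.Ioo 0 v :=
              ⟨Set.mem_insert_of_mem _ ⟨hcA, le_refl c⟩, hcpos, hlt⟩
            rw [hgap] at this
            exact this
          · exact le_antisymm hge hvA.2
        subst hvc
        exact hhom
      · -- u ∈ A, u ≥ c > 0
        have hvA : v ∈ A := by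
          rcases hv with rfl | hv
          · exact absurd huv (not_lt_of_gt (lt_of_lt_of_le hcpos huc))
          · exact hv.1
        have hAgap : A ∩ Set.Ioo u v = ∅ := by
          apply Set.eq_empty_of_subset_empty
          rintro t ⟨htA, htuv⟩
          rw [← hgap]
          exact ⟨Set.mem_insert_of_mem _ ⟨htA, le_trans huc htuv.1.le⟩, htuv⟩
        exact hAhom u huA v hvA huv hAgap hu1 hu2
  · apply Set.eq_empty_of_subset_empty
    rintro x ⟨(rfl | ⟨-, hxc⟩), hx0, hxc'⟩
    · exact absurd hx0 (lt_irrefl 0)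
    · exact absurd hxc' (not_lt_of_ge hxc)
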